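/- arXiv:2109.12972 — 4 statements merged into one kernel-verified Lean document; each statement's English description precedes it below -/
import Mathlib

section
/- Let A(n) = 32(n+1)(2n+1)(2n+3)(4n+3)(4n+5)(8n+3)^2(8n+5)^2(8n+7)^2(8n+9)^2 · (654311424n^8 − 763363328n^7 + 336592896n^6 − 62390272n^5 + 1949696n^4 + 706560n^3 − 43520n^2 − 2880n + 225), B(n) = 3(2n+1) · (1011688620292508221440n^20 + 6913205571998806179840n^19 + 20264522984105850175488n^18 + 32694809236419354034176n^17 + 30311863475685170348032n^16 + 13940981944461731823616n^15 − 511604730729009774592n^14 − 3973361701783984930816n^13 − 1526200168532215332864n^12 + 194737260750799110144n^11 + 269867025941865168896n^10 + 37629485093249613824n^9 − 17598923437928087552n^8 − 5481696915139592192n^7 + 199010711963172864n^6 + 237194722753118208n^5 + 18366301200549888n^4 − 2095780639795200n^3 − 198344332843200n^2 + 7359342480000n + 776998726875), and C(n) = 1536n^3(6n−1)(6n+1)(8n+1)^2(8n−1)^2(8n−3)^2(8n−5)^2 · (654311424n^8 + 4471128064n^7 + 13313769472n^6 + 22567976960n^5 + 23822974976n^4 + 16040183808n^3 + 6728855040n^2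 + 1608382656n + 167760801). Suppose q, p : ℕ → ℚ both satisfy the recurrence A(n)·r(n+1) − B(n)·r(n) − C(n)·r(n−1) = 0 for all integers n ≥ 1, with initial values q(0) = p(0) = 1, q(1) = 1289/160, p(1) = 136185509/15876000. Then |q(n)|^{1/n} → 135 + 78√3 and |p(n)|^{1/n} → 135 + 78√3 as n → ∞. -/
open Filter Real

/-- The leading polynomial coefficient `A(n)` of the recursion. -/
noncomputable def apA (n : ℚ) : ℚ :=
  32*(n+1)*(2*n+1)*(2*n+3)*(4*n+3)*(4*n+5)*(8*n+3)^2*(8*n+5)^2*(8*n+7)^2*(8*n+9)^2 *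
    (654311424*n^8 - 763363328*n^7 + 336592896*n^6 - 62390272*n^5 + 1949696*n^4
      + 706560*n^3 - 43520*n^2 - 2880*n + 225)

/-- The middle polynomial coefficient `B(n)` of the recursion. -/
noncomputable def apB (n : ℚ) : ℚ :=
  3*(2*n+1) *
    (1011688620292508221440*n^20 + 6913205571998806179840*n^19
      + 20264522984105850175488*n^18 + 32694809236419354034176*n^17
      + 30311863475685170348032*n^16 + 13940981944461731823616*n^15
      - 511604730729009774592*n^14 - 3973361701783984930816*n^13
      - 1526200168532215332864*n^12 + 194737260750799110144*n^11
      + 269867025941865168896*n^10 + 37629485093249613824*n^9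
      - 17598923437928087552*n^8 - 5481696915139592192*n^7
      + 199010711963172864*n^6 + 237194722753118208*n^5
      + 18366301200549888*n^4 - 2095780639795200*n^3
      - 198344332843200*n^2 + 7359342480000*n + 776998726875)

/-- The trailing polynomial coefficient `C(n)` of the recursion. -/
noncomputable def apC (n : ℚ) : ℚ :=
  1536*n^3*(6*n-1)*(6*n+1)*(8*n+1)^2*(8*n-1)^2*(8*n-3)^2*(8*n-5)^2 *
    (654311424*n^8 + 4471128064*n^7 + 13313769472*n^6 + 22567976960*n^5
      + 23822974976*n^4 + 16040183808*n^3 + 6728855040*n^2 + 1608382656*n + 167760801)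

lemma apA_pos (m : ℕ) : 0 < apA ((m:ℚ)+1) := by
  have h : apA ((m:ℚ)+1) = (13491328261381058088000 : ℚ) + 227505001100359326458400*(m:ℚ) + 1810936102839997324089600*(m:ℚ)^2 + 9049505680847040865066368*(m:ℚ)^3 + 31849003495466537950457856*(m:ℚ)^4 + 83946707606859123981256704*(m:ℚ)^5 + 172021163235499820002443264*(m:ℚ)^6 + 280791147694574658418900992*(m:ℚ)^7 + 371068573867416867288645632*(m:ℚ)^8 + 401276932418714894744944640*(m:ℚ)^9 + 357444651393455485534339072*(m:ℚ)^10 + 263104889317646851400269824*(m:ℚ)^11 + 160048339056372884449525760*(m:ℚ)^12 + 80220831309905074654806016*(m:ℚ)^13 + 32920911072110246648348672*(m:ℚ)^14 + 10945657139466711982931968*(m:ℚ)^15 + 2901568255348522323279872*(m:ℚ)^16 + 598641645593593148080128*(m:ℚ)^17 + 92614328580256093437952*(m:ℚ)^18 + 10105032728705843068928*(m:ℚ)^19 + 693194054644866744320*(m:ℚ)^20 + 22481969339833516032*(m:ℚ)^21 := by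
    simp only [apA, apB, apC]; ring
  rw [h]; positivity

lemma apB_pos (m : ℕ) : 0 < apB ((m:ℚ)+1) := by
  have h : apB ((m:ℚ)+1) = (896449596021885081301875 : ℚ) + 15844844036181521405657250*(m:ℚ) + 132465547508009365183291200*(m:ℚ)^2 + 696652044014119873157608320*(m:ℚ)^3 + 2585676283194200814259476480*(m:ℚ)^4 + 7202260452965834041006043136*(m:ℚ)^5 + 15629076105534642028467978240*(m:ℚ)^6 + 27071777035313279256804458496*(m:ℚ)^7 + 38041536588142550167823843328*(m:ℚ)^8 + 43832593222188196367161098240*(m:ℚ)^9 + 41684712298771456697340788736*(m:ℚ)^10 + 32821848812849931813849661440*(m:ℚ)^11 + 21398620880905950311259045888*(m:ℚ)^12 + 11516975893237272821373075456*(m:ℚ)^13 + 5084365194952469073207754752*(m:ℚ)^14 + 1821785182977714554778157056*(m:ℚ)^15 + 521356593463750996487307264*(m:ℚ)^16 + 116319193835942547699007488*(m:ℚ)^17 + 19492162817742416885317632*(m:ℚ)^18 + 2307340402046599113474048*(m:ℚ)^19 + 171987065449726397644800*(m:ℚ)^20 + 6070131721755049328640*(m:ℚ)^21 := by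
    simp only [apA, apB, apC]; ring
  rw [h]; positivity

lemma apC_pos (m : ℕ) : 0 < apC ((m:ℚ)+1) := by
  have h : apC ((m:ℚ)+1) = (4290822996745045824000 : ℚ) + 94364756684166196569600*(m:ℚ) + 970979668832625752563200*(m:ℚ)^2 + 6222334832086242462755328*(m:ℚ)^3 + 27881901148397059606099968*(m:ℚ)^4 + 92962796535215087431636992*(m:ℚ)^5 + 239559604972027280603086848*(m:ℚ)^6 + 489124101392264117135867904*(m:ℚ)^7 + 804580896963911896006656000*(m:ℚ)^8 + 1078164872680928879465988096*(m:ℚ)^9 + 1185128702912594597010997248*(m:ℚ)^10 + 1072297002574735048295055360*(m:ℚ)^11 + 798888161507809993452158976*(m:ℚ)^12 + 488742680027640954372489216*(m:ℚ)^13 + 244011942882453670235996160*(m:ℚ)^14 + 98397328278047797486288896*(m:ℚ)^15 + 31542273109688064499777536*(m:ℚ)^16 + 7847234879454949756895232*(m:ℚ)^17 + 1459949743473616584966144*(m:ℚ)^18 + 191061935570664567078912*(m:ℚ)^19 + 15681173614533877432320*(m:ℚ)^20 + 607013172175504932864*(m:ℚ)^21 := by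
    simp only [apA, apB, apC]; ring
  rw [h]; positivity

lemma bndB1 (m : ℕ) : 0 ≤ 1024*apA ((m:ℚ)+1) - ((m:ℚ)+1)*(apB ((m:ℚ)+1) - 270*apA ((m:ℚ)+1)) := by
  have h : 1024*apA ((m:ℚ)+1) - ((m:ℚ)+1)*(apB ((m:ℚ)+1) - 270*apA ((m:ℚ)+1)) = (16561329174205204084570125 : ℚ) + 281292836422234447633970475*(m:ℚ) + 2256467275827862668926761950*(m:ℚ)^2 + 11369895507260740918559172672*(m:ℚ)^3 + 40373648729754080454043300224*(m:ℚ)^4 + 107438333850891636823104276480*(m:ℚ)^5 + 222429659722088254488626872320*(m:ℚ)^6 + 367088606049516638109445128192*(m:ℚ)^7 + 490863030838516754619982413824*(m:ℚ)^8 + 537566735683688881432907743232*(m:ℚ)^9 + 485360845135224766798067924992*(m:ℚ)^10 + 362461221541646618295030251520*(m:ℚ)^11 + 223920401160955280230650478592*(m:ℚ)^12 + 114103210486094622272058818560*(m:ℚ)^13 + 47657942292795287425179975680*(m:ℚ)^14 + 16146175950009508272982196224*(m:ℚ)^15 + 4366814973635534570450321408*(m:ℚ)^16 + 920389931042517016714936320*(m:ℚ)^17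 + 145664828839436570306019328*(m:ℚ)^18 + 16282277847825490160648192*(m:ℚ)^19 + 1146024475964709684641792*(m:ℚ)^20 + 38196865908377143738368*(m:ℚ)^21 := by
    simp only [apA, apB, apC]; ring
  rw [h]; positivity

lemma bndB2 (m : ℕ) : 0 ≤ 1024*apA ((m:ℚ)+1) + ((m:ℚ)+1)*(apB ((m:ℚ)+1) - 270*apA ((m:ℚ)+1)) := by
  have h : 1024*apA ((m:ℚ)+1) + ((m:ℚ)+1)*(apB ((m:ℚ)+1) - 270*apA ((m:ℚ)+1)) = (11068911105103202879653875 : ℚ) + 184637405831301452952832725*(m:ℚ) + 1452329862788451850808738850*(m:ℚ)^2 + 7163492127113998773096748992*(m:ℚ)^3 + 24853110428961389268494388864*(m:ℚ)^4 + 64484523327955849090509453312*(m:ℚ)^5 + 129869682584215376876376932352*(m:ℚ)^6 + 207971664428972262332464103424*(m:ℚ)^7 + 269085408441952989587163840512*(m:ℚ)^8 + 284248421909839223004738879488*(m:ℚ)^9 + 246685800918572067576258494464*(m:ℚ)^10 + 176377591780894133372722348032*(m:ℚ)^11 + 103858597226496387121978277888*(m:ℚ)^12 + 50189052036590970620983902208*(m:ℚ)^13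 + 19764083582886497710638104576*(m:ℚ)^14 + 6270529871618317868062474240*(m:ℚ)^15 + 1575596813318239147626856448*(m:ℚ)^16 + 305628159133161750553165824*(m:ℚ)^17 + 44009316092927909054906368*(m:ℚ)^18 + 4412829180564076444516352*(m:ℚ)^19 + 273636947947977407725568*(m:ℚ)^20 + 7846207299601897095168*(m:ℚ)^21 := by
    simp only [apA, apB, apC]; ring
  rw [h]; positivity

lemma bndC1 (m : ℕ) : 0 ≤ 1024*apA ((m:ℚ)+1) - ((m:ℚ)+1)*(apC ((m:ℚ)+1) - 27*apA ((m:ℚ)+1)) := by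
  have h : 1024*apA ((m:ℚ)+1) - ((m:ℚ)+1)*(apC ((m:ℚ)+1) - 27*apA ((m:ℚ)+1)) = (14175095179714747004664000 : ℚ) + 239373366439854029433760800*(m:ℚ) + 1908371134689030097483413600*(m:ℚ)^2 + 9552732430846001008719853440*(m:ℚ)^3 + 33683535091137718187219143296*(m:ℚ)^4 + 88967068091502923681925421056*(m:ℚ)^5 + 182728281264388264802027077632*(m:ℚ)^6 + 299027383927992169740591955968*(m:ℚ)^7 + 396280727124052467284534362112*(m:ℚ)^8 + 429878161696844769018257604608*(m:ℚ)^9 + 384245512214233493978226884608*(m:ℚ)^10 + 283916818554982809285804687360*(m:ℚ)^11 + 173443451195741821502511644672*(m:ℚ)^12 + 87345768019696850394513670144*(m:ℚ)^13 + 36033085359245211618485731328*(m:ℚ)^14 + 12050340981365989485844627456*(m:ℚ)^15 + 3215141377749162323320242176*(m:ℚ)^16 + 668125204424133487104098304*(m:ℚ)^17 + 104193799145947602859589632*(m:ℚ)^18 + 11469964590492474436222976*(m:ℚ)^19 + 794639725921614266630144*(m:ℚ)^20 + 26056602464867045081088*(m:ℚ)^21 := by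
    simp only [apA, apB, apC]; ring
  rw [h]; positivity

lemma bndC2 (m : ℕ) : 0 ≤ 1024*apA ((m:ℚ)+1) + ((m:ℚ)+1)*(apC ((m:ℚ)+1) - 27*apA ((m:ℚ)+1)) := by
  have h : 1024*apA ((m:ℚ)+1) + ((m:ℚ)+1)*(apC ((m:ℚ)+1) - 27*apA ((m:ℚ)+1)) = (13455145099593659959560000 : ℚ) + 226556875813681871153042400*(m:ℚ) + 1800426003927284422252087200*(m:ℚ)^2 + 8980655203528738682936068224*(m:ℚ)^3 + 31543224067577751535318545792*(m:ℚ)^4 + 82955789087344562231688308736*(m:ℚ)^5 + 169571061041915366562976727040*(m:ℚ)^6 + 276032886550496730701317275648*(m:ℚ)^7 + 363667712156417276922611892224*(m:ℚ)^8 + 391936995896683335419389018112*(m:ℚ)^9 + 347801133839563340396099534848*(m:ℚ)^10 + 254921994767557942381947912192*(m:ℚ)^11 + 154335547191709845850117111808*(m:ℚ)^12 + 76946494502988742498529050624*(m:ℚ)^13 + 31388940516436573517332348928*(m:ℚ)^14 + 10366364840261836655200043008*(m:ℚ)^15 + 2727270409204611394756935680*(m:ℚ)^16 + 557892885751545280164003840*(m:ℚ)^17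 + 85480345786416876501336064*(m:ℚ)^18 + 9225142437897092168941568*(m:ℚ)^19 + 625021697991072825737216*(m:ℚ)^20 + 19986470743111995752448*(m:ℚ)^21 := by
    simp only [apA, apB, apC]; ring
  rw [h]; positivity

noncomputable def lam : ℝ := 135 + 78 * Real.sqrt 3

lemma sqrt3_sq : Real.sqrt 3 * Real.sqrt 3 = 3 := Real.mul_self_sqrt (by norm_num)

lemma lam_ge : (270:ℝ) ≤ lam := by
  have h := sqrt3_sq; have h2 := Real.sqrt_nonneg 3
  unfold lam; nlinarith

lemma lam_le : lam ≤ 271 := by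
  have h := sqrt3_sq; have h2 := Real.sqrt_nonneg 3
  unfold lam; nlinarith

lemma lam_pos : (0:ℝ) < lam := lt_of_lt_of_le (by norm_num) lam_ge

lemma lam_sq : lam * lam = 270 * lam + 27 := by
  unfold lam; nlinarith [sqrt3_sq]

noncomputable def aR (m : ℕ) : ℝ := ((apA ((m:ℚ)+1) : ℚ) : ℝ)
noncomputable def bR (m : ℕ) : ℝ := ((apB ((m:ℚ)+1) : ℚ) : ℝ)
noncomputable def cR (m : ℕ) : ℝ := ((apC ((m:ℚ)+1) : ℚ) : ℝ)

lemma aR_pos (m : ℕ) : 0 < aR m := by unfold aR; exact_mod_cast apA_pos m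
lemma bR_pos (m : ℕ) : 0 < bR m := by unfold bR; exact_mod_cast apB_pos m
lemma cR_pos (m : ℕ) : 0 < cR m := by unfold cR; exact_mod_cast apC_pos m

lemma ratioB (m : ℕ) : |bR m / aR m - 270| ≤ 1024 / ((m:ℝ)+1) := by
  have hA : (0:ℝ) < aR m := aR_pos m
  have hm : (0:ℝ) < (m:ℝ)+1 := by positivity
  have h1 : ((m:ℝ)+1) * (bR m - 270 * aR m) ≤ 1024 * aR m := by
    have h := bndB1 m
    have h' : ((0:ℚ):ℝ) ≤ (((1024*apA ((m:ℚ)+1) - ((m:ℚ)+1)*(apB ((m:ℚ)+1) - 270*apA ((m:ℚ)+1))) : ℚ) : ℝ) := by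
      exact_mod_cast h
    unfold aR bR
    push_cast at h'
    linarith
  have h2 : -(1024 * aR m) ≤ ((m:ℝ)+1) * (bR m - 270 * aR m) := by
    have h := bndB2 m
    have h' : ((0:ℚ):ℝ) ≤ (((1024*apA ((m:ℚ)+1) + ((m:ℚ)+1)*(apB ((m:ℚ)+1) - 270*apA ((m:ℚ)+1))) : ℚ) : ℝ) := by
      exact_mod_cast h
    unfold aR bR
    push_cast at h'
    linarith
  rw [show bR m / aR m - 270 = (bR m - 270 * aR m) / aR m by field_simp, abs_div,
    abs_of_pos hA, div_le_div_iff₀ hA hm]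
  rcases abs_cases (bR m - 270 * aR m) with ⟨he, _⟩ | ⟨he, _⟩ <;> nlinarith

lemma ratioC (m : ℕ) : |cR m / aR m - 27| ≤ 1024 / ((m:ℝ)+1) := by
  have hA : (0:ℝ) < aR m := aR_pos m
  have hm : (0:ℝ) < (m:ℝ)+1 := by positivity
  have h1 : ((m:ℝ)+1) * (cR m - 27 * aR m) ≤ 1024 * aR m := by
    have h := bndC1 m
    have h' : ((0:ℚ):ℝ) ≤ (((1024*apA ((m:ℚ)+1) - ((m:ℚ)+1)*(apC ((m:ℚ)+1) - 27*apA ((m:ℚ)+1))) : ℚ) : ℝ) := by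
      exact_mod_cast h
    unfold aR cR
    push_cast at h'
    linarith
  have h2 : -(1024 * aR m) ≤ ((m:ℝ)+1) * (cR m - 27 * aR m) := by
    have h := bndC2 m
    have h' : ((0:ℚ):ℝ) ≤ (((1024*apA ((m:ℚ)+1) + ((m:ℚ)+1)*(apC ((m:ℚ)+1) - 27*apA ((m:ℚ)+1))) : ℚ) : ℝ) := by
      exact_mod_cast h
    unfold aR cR
    push_cast at h'
    linarith
  rw [show cR m / aR m - 27 = (cR m - 27 * aR m) / aR m by field_simp, abs_div,
    abs_of_pos hA, div_le_div_iff₀ hA hm]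
  rcases abs_cases (cR m - 27 * aR m) with ⟨he, _⟩ | ⟨he, _⟩ <;> nlinarith

lemma ratio_tendsto (R : ℕ → ℝ) (hRpos : ∀ n, 0 < R n)
    (hrec : ∀ m : ℕ, R (m+1) = bR m / aR m + (cR m / aR m) / R m) :
    Filter.Tendsto R Filter.atTop (nhds lam) := by
  have hlow : ∀ n : ℕ, 4096 ≤ n → 269 ≤ R n := by
    intro n hn
    obtain ⟨m, rfl⟩ : ∃ m, n = m + 1 := ⟨n - 1, by omega⟩
    have hm : (4095:ℝ) ≤ (m:ℝ) := by exact_mod_cast (by omega : 4095 ≤ m)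
    have hβ := (abs_le.mp (ratioB m)).1
    have hδ : 1024 / ((m:ℝ)+1) ≤ 1/4 := by
      rw [div_le_div_iff₀ (by linarith) (by norm_num)]; linarith
    have hγ : 0 < cR m / aR m / R m := by
      have := cR_pos m; have := aR_pos m; have := hRpos m; positivity
    rw [hrec m]; linarith
  have hup : ∀ n : ℕ, 4097 ≤ n → R n ≤ 271 := by
    intro n hn
    obtain ⟨m, rfl⟩ : ∃ m, n = m + 1 := ⟨n - 1, by omega⟩
    have hm : (4096:ℝ) ≤ (m:ℝ) := by exact_mod_cast (by omega : 4096 ≤ m)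
    have hRm : 269 ≤ R m := hlow m (by omega)
    have hβ := (abs_le.mp (ratioB m)).2
    have hγ := (abs_le.mp (ratioC m)).2
    have hδ : 1024 / ((m:ℝ)+1) ≤ 1/4 := by
      rw [div_le_div_iff₀ (by linarith) (by norm_num)]; linarith
    have hdiv : cR m / aR m / R m ≤ 1/2 := by
      rw [div_le_iff₀ (by linarith : (0:ℝ) < R m)]; linarith
    rw [hrec m]; linarith
  have hcontr : ∀ m : ℕ, 4096 ≤ m →
      |R (m+1) - lam| ≤ 2048/((m:ℝ)+1) + |R m - lam|/2 := by
    intro m hm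
    have hRm : 269 ≤ R m := hlow m hm
    have hRmpos : (0:ℝ) < R m := by linarith
    have hlam := lam_pos
    have h27 : 27 / lam = lam - 270 := by
      rw [div_eq_iff hlam.ne']; nlinarith [lam_sq]
    have hsplit : (cR m / aR m)/R m = (cR m / aR m - 27)/R m + 27/R m := by
      rw [← add_div]; ring_nf
    have hfrac : 27/R m - 27/lam = 27*(lam - R m)/(R m * lam) := by
      field_simp
    have hid : R (m+1) - lam = (bR m / aR m - 270) + (cR m / aR m - 27)/R m
        + 27*(lam - R m)/(R m * lam) := by
      rw [hrec m, hsplit, ← hfrac, h27]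
      ring
    have t1 := ratioB m
    have t2 := ratioC m
    have b2 : |(cR m / aR m - 27)/R m| ≤ 1024/((m:ℝ)+1) := by
      rw [abs_div, abs_of_pos hRmpos]
      calc |cR m / aR m - 27| / R m ≤ |cR m / aR m - 27| :=
            div_le_self (abs_nonneg _) (by linarith)
        _ ≤ 1024/((m:ℝ)+1) := t2
    have b3 : |27*(lam - R m)/(R m * lam)| ≤ |R m - lam|/2 := by
      rw [abs_div, abs_of_pos (mul_pos hRmpos hlam), abs_mul, abs_sub_comm lam (R m)]
      rw [div_le_iff₀ (mul_pos hRmpos hlam)]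
      have h270 := lam_ge
      have habs : (0:ℝ) ≤ |R m - lam| := abs_nonneg _
      have : |(27:ℝ)| = 27 := by norm_num
      rw [this]
      have h54 : (54:ℝ) ≤ R m * lam := by nlinarith
      nlinarith [mul_le_mul_of_nonneg_left h54 habs]
    calc |R (m+1) - lam| = |(bR m / aR m - 270) + (cR m / aR m - 27)/R m
          + 27*(lam - R m)/(R m * lam)| := by rw [hid]
      _ ≤ |(bR m / aR m - 270) + (cR m / aR m - 27)/R m| + |27*(lam - R m)/(R m * lam)| :=
          abs_add_le _ _
      _ ≤ |bR m / aR m - 270| + |(cR m / aR m - 27)/R m| + |27*(lam - R m)/(R m * lam)| := by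
          have := abs_add_le (bR m / aR m - 270) ((cR m / aR m - 27)/R m); linarith
      _ ≤ 1024/((m:ℝ)+1) + 1024/((m:ℝ)+1) + |R m - lam|/2 := by linarith
      _ = 2048/((m:ℝ)+1) + |R m - lam|/2 := by ring
  rw [Metric.tendsto_atTop]
  intro ε hε
  obtain ⟨M0, hM0⟩ := exists_nat_ge ((8192:ℝ)/ε)
  set M := max M0 4097 with hMdef
  have hM4097 : 4097 ≤ M := le_max_right _ _
  have hMba : ((8192:ℝ)/ε) ≤ (M:ℝ) := le_trans hM0 (by exact_mod_cast le_max_left M0 4097)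
  have hsmall : ∀ k : ℕ, M ≤ k → 2048/((k:ℝ)+1) ≤ ε/4 := by
    intro k hk
    have hk' : (M:ℝ) ≤ (k:ℝ) := by exact_mod_cast hk
    have h1 : (8192:ℝ)/ε ≤ (k:ℝ)+1 := le_trans hMba (by linarith)
    have h8 : (8192:ℝ) ≤ ((k:ℝ)+1) * ε := (div_le_iff₀ hε).mp h1
    rw [div_le_iff₀ (by positivity)]
    nlinarith
  have key : ∀ k : ℕ, |R (M+k) - lam| ≤ ε/2 + 2*(1/2:ℝ)^k := by
    intro k
    induction k with
    | zero =>
      have l1 : 269 ≤ R M := hlow M (by omega)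
      have l2 : R M ≤ 271 := hup M hM4097
      rw [pow_zero]
      simp only [Nat.add_zero]
      rcases abs_cases (R M - lam) with ⟨he, _⟩ | ⟨he, _⟩ <;>
        nlinarith [lam_ge, lam_le, hε.le]
    | succ k ih =>
      have hc := hcontr (M+k) (by omega)
      have hs := hsmall (M+k) (by omega)
      have hcast : ((M+k:ℕ):ℝ) = (M:ℝ)+(k:ℝ) := by push_cast; ring
      rw [pow_succ]
      rw [hcast] at hc hs
      have : |R (M+k+1) - lam| ≤ ε/4 + |R (M+k) - lam|/2 := by linarith
      show |R (M+(k+1)) - lam| ≤ _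
      have hidx : M+(k+1) = (M+k)+1 := by omega
      rw [hidx]
      linarith
  obtain ⟨K, hK⟩ := exists_pow_lt_of_lt_one (show (0:ℝ) < ε/8 by linarith)
    (show (1/2:ℝ) < 1 by norm_num)
  refine ⟨M+K, fun n hn => ?_⟩
  obtain ⟨k, rfl⟩ : ∃ k, n = M + k := ⟨n - M, by omega⟩
  have hkK : K ≤ k := by omega
  have hpow : (1/2:ℝ)^k ≤ (1/2:ℝ)^K := pow_le_pow_of_le_one (by norm_num) (by norm_num) hkK
  rw [Real.dist_eq]
  calc |R (M+k) - lam| ≤ ε/2 + 2*(1/2:ℝ)^k := key k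
    _ ≤ ε/2 + 2*(1/2:ℝ)^K := by linarith
    _ < ε/2 + 2*(ε/8) := by linarith
    _ ≤ ε := by linarith

lemma root_of_ratio (Q : ℕ → ℝ) (hQ : ∀ n, 0 < Q n)
    (h : Filter.Tendsto (fun n => Q (n+1) / Q n) Filter.atTop (nhds lam)) :
    Filter.Tendsto (fun n : ℕ => |Q n| ^ (1 / (n : ℝ))) Filter.atTop (nhds lam) := by
  have hlogR : Filter.Tendsto (fun n => Real.log (Q (n+1) / Q n)) Filter.atTop
      (nhds (Real.log lam)) :=
    ((Real.continuousAt_log lam_pos.ne').tendsto).comp h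
  have hces := hlogR.cesaro
  have hsum : ∀ n : ℕ, Real.log (Q n) = Real.log (Q 0)
      + ∑ i ∈ Finset.range n, Real.log (Q (i+1) / Q i) := by
    intro n
    induction n with
    | zero => simp
    | succ k ih =>
      rw [Finset.sum_range_succ, ← add_assoc, ← ih,
        Real.log_div (hQ (k+1)).ne' (hQ k).ne']
      ring
  have hzero : Filter.Tendsto (fun n : ℕ => (n:ℝ)⁻¹ * Real.log (Q 0)) Filter.atTop (nhds 0) := by
    have := tendsto_const_div_atTop_nhds_zero_nat (Real.log (Q 0))
    refine this.congr fun n => ?_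
    rw [div_eq_inv_mul]
  have hlogQ : Filter.Tendsto (fun n : ℕ => (n:ℝ)⁻¹ * Real.log (Q n)) Filter.atTop
      (nhds (Real.log lam)) := by
    have hadd := hzero.add hces
    rw [zero_add] at hadd
    refine hadd.congr fun n => ?_
    rw [hsum n]
    ring
  have hexp : Filter.Tendsto (fun n : ℕ => Real.exp ((n:ℝ)⁻¹ * Real.log (Q n)))
      Filter.atTop (nhds lam) := by
    have := (Real.continuous_exp.tendsto (Real.log lam)).comp hlogQ
    rwa [Real.exp_log lam_pos] at this
  refine hexp.congr fun n => ?_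
  rw [abs_of_pos (hQ n), Real.rpow_def_of_pos (hQ n), one_div, mul_comm]

lemma solution_tendsto (q : ℕ → ℚ)
    (hq : ∀ n : ℕ, 1 ≤ n → apA n * q (n+1) - apB n * q n - apC n * q (n-1) = 0)
    (h0 : 0 < q 0) (h1 : 0 < q 1) :
    Filter.Tendsto (fun n : ℕ => |(q n : ℝ)| ^ (1 / (n : ℝ))) Filter.atTop (nhds lam) := by
  have hrec : ∀ m : ℕ, apA ((m:ℚ)+1) * q (m+2)
      = apB ((m:ℚ)+1) * q (m+1) + apC ((m:ℚ)+1) * q m := by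
    intro m
    have h := hq (m+1) (Nat.le_add_left 1 m)
    have e : ((m+1:ℕ):ℚ) = (m:ℚ)+1 := by push_cast; ring
    simp only [Nat.add_sub_cancel] at h
    rw [e] at h
    linarith
  have hpos : ∀ n, 0 < q n := by
    have key : ∀ n, 0 < q n ∧ 0 < q (n+1) := by
      intro n
      induction n with
      | zero => exact ⟨h0, h1⟩
      | succ k ih =>
        refine ⟨ih.2, ?_⟩
        have h := hrec k
        have hA := apA_pos k
        have hpos2 : 0 < apA ((k:ℚ)+1) * q (k+2) := by
          rw [h]
          exact add_pos (mul_pos (apB_pos k) ih.2) (mul_pos (apC_pos k) ih.1)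
        nlinarith
    exact fun n => (key n).1
  have hQpos : ∀ n, (0:ℝ) < (q n : ℝ) := fun n => by exact_mod_cast hpos n
  have hRpos : ∀ n, 0 < ((q (n+1) : ℝ) / (q n : ℝ)) := fun n => div_pos (hQpos _) (hQpos _)
  have hRrec : ∀ m : ℕ, ((q (m+1+1) : ℝ) / (q (m+1) : ℝ))
      = bR m / aR m + (cR m / aR m) / ((q (m+1) : ℝ) / (q m : ℝ)) := by
    intro m
    have h : aR m * (q (m+2) : ℝ) = bR m * (q (m+1) : ℝ) + cR m * (q m : ℝ) := by
      have h' := hrec m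
      unfold aR bR cR
      exact_mod_cast h'
    have hA := (aR_pos m).ne'
    have h1' := (hQpos m).ne'
    have h2' := (hQpos (m+1)).ne'
    show ((q (m+2) : ℝ) / (q (m+1) : ℝ)) = _
    field_simp
    linear_combination h
  exact root_of_ratio (fun n => (q n : ℝ)) hQpos
    (ratio_tendsto (fun n => (q (n+1) : ℝ) / (q n : ℝ)) hRpos hRrec)

/-- The `n`-th root asymptotics of the solutions `q`, `p` of the recursion:
both tend to `135 + 78√3`. -/
theorem apery_denominators_root_asymptotics (q p : ℕ → ℚ)
    (hq : ∀ n : ℕ, 1 ≤ n → apA n * q (n+1) - apB n * q n - apC n * q (n-1) = 0)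
    (hp : ∀ n : ℕ, 1 ≤ n → apA n * p (n+1) - apB n * p n - apC n * p (n-1) = 0)
    (hq0 : q 0 = 1) (hp0 : p 0 = 1)
    (hq1 : q 1 = 1289/160) (hp1 : p 1 = 136185509/15876000) :
    Filter.Tendsto (fun n : ℕ => |(q n : ℝ)| ^ (1 / (n : ℝ))) Filter.atTop
        (nhds (135 + 78 * Real.sqrt 3)) ∧
    Filter.Tendsto (fun n : ℕ => |(p n : ℝ)| ^ (1 / (n : ℝ))) Filter.atTop
        (nhds (135 + 78 * Real.sqrt 3)) := by
  constructor
  · have h := solution_tendsto q hq (by rw [hq0]; norm_num) (by rw [hq1]; norm_num)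
    unfold lam at h
    exact h
  · have h := solution_tendsto p hp (by rw [hp0]; norm_num) (by rw [hp1]; norm_num)
    unfold lam at h
    exact h
end

section
/- ψ₁(11/12) − ψ₁(7/12) + ψ₁(1/12) − ψ₁(5/12) = 8π²√3, where ψ₁(x) = Σ_{n=0}^∞ 1/(n+x)². -/
open Real

/-- The trigamma function `ψ₁(x) = Σ_{n≥0} 1/(n+x)²`. -/
noncomputable def trigamma (x : ℝ) : ℝ := ∑' n : ℕ, 1 / ((n : ℝ) + x)^2

lemma summable_trigamma {x : ℝ} (hx : 0 < x) :
    Summable (fun n : ℕ => 1 / ((n:ℝ) + x)^2) := by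
  rw [← summable_nat_add_iff 1]
  refine Summable.of_nonneg_of_le (fun n => by positivity) (fun n => ?_)
    ((summable_nat_add_iff 1).2 <| Real.summable_one_div_nat_pow.2 one_lt_two)
  rw [one_div, one_div]
  push_cast
  have hn : (0:ℝ) ≤ (n:ℝ) := n.cast_nonneg
  exact inv_anti₀ (by positivity) (by nlinarith)

lemma hasSum_trigamma {x : ℝ} (hx : 0 < x) :
    HasSum (fun n : ℕ => 1 / ((n:ℝ) + x)^2) (trigamma x) :=
  (summable_trigamma hx).hasSum

/-- The auxiliary function whose sum we compute in two ways. -/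
noncomputable def trigammaAuxF (n : ℕ) : ℝ :=
  1 / (n : ℝ) ^ (2 * 1) * Real.cos (2 * π * n * (1/12)) -
    1 / (n : ℝ) ^ (2 * 1) * Real.cos (2 * π * n * (5/12))

lemma bernoulli_poly_two_eval (x : ℝ) :
    (Polynomial.map (algebraMap ℚ ℝ) (Polynomial.bernoulli 2)).eval x = x^2 - x + 1/6 := by
  simp [Polynomial.bernoulli, Finset.sum_range_succ, bernoulli, bernoulli'_two]
  ring

lemma hasSum_trigammaAuxF : HasSum trigammaAuxF (π^2/6) := by
  have hA := hasSum_one_div_nat_pow_mul_cos (k := 1) one_ne_zero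
    (x := 1/12) (by norm_num : (1/12 : ℝ) ∈ Set.Icc (0:ℝ) 1)
  have hB := hasSum_one_div_nat_pow_mul_cos (k := 1) one_ne_zero
    (x := 5/12) (by norm_num : (5/12 : ℝ) ∈ Set.Icc (0:ℝ) 1)
  rw [bernoulli_poly_two_eval] at hA hB
  have h := hA.sub hB
  convert h using 1
  case e'_3 => rfl
  case e'_5 => rfl
  norm_num [Nat.factorial]
  ring

lemma trigammaAuxF_fiber (r : ℕ) (hr1 : 1 ≤ r) (hr : r < 12) :
    HasSum (fun q : ℕ => trigammaAuxF (q * 12 + r))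
      ((Real.cos (2 * π * r * (1/12)) - Real.cos (2 * π * r * (5/12))) / 144 *
        trigamma ((r:ℝ)/12)) := by
  have hrpos : (0:ℝ) < (r:ℝ)/12 := by
    have : (1:ℝ) ≤ (r:ℝ) := by exact_mod_cast hr1
    linarith
  have h := (hasSum_trigamma hrpos).mul_left
    ((Real.cos (2 * π * r * (1/12)) - Real.cos (2 * π * r * (5/12))) / 144)
  rw [trigamma] at h ⊢
  refine h.congr_fun fun q => ?_
  have h1 : 2 * π * ((q * 12 + r : ℕ) : ℝ) * (1/12)
      = 2 * π * (r:ℝ) * (1/12) + (q : ℤ) * (2 * π) := by push_cast; ring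
  have h2 : 2 * π * ((q * 12 + r : ℕ) : ℝ) * (5/12)
      = 2 * π * (r:ℝ) * (5/12) + ((5 * q : ℕ) : ℤ) * (2 * π) := by push_cast; ring
  have hcast : ((q * 12 + r : ℕ) : ℝ) = 12 * (q:ℝ) + r := by push_cast; ring
  unfold trigammaAuxF
  rw [h1, h2, Real.cos_add_int_mul_two_pi, Real.cos_add_int_mul_two_pi, hcast]
  have hq0 : (0:ℝ) < 12 * (q:ℝ) + r := by
    have : (1:ℝ) ≤ (r:ℝ) := by exact_mod_cast hr1
    have : (0:ℝ) ≤ (q:ℝ) := q.cast_nonneg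
    linarith
  have hq1 : (0:ℝ) < (q:ℝ) + (r:ℝ)/12 := by linarith
  field_simp
  ring

lemma trigammaAuxF_fiber_zero :
    HasSum (fun q : ℕ => trigammaAuxF (q * 12 + 0)) 0 := by
  have : (fun q : ℕ => trigammaAuxF (q * 12 + 0)) = fun _ => (0:ℝ) := by
    funext q
    unfold trigammaAuxF
    have h1 : 2 * π * ((q * 12 + 0 : ℕ) : ℝ) * (1/12) = 0 + (q : ℤ) * (2 * π) := by
      push_cast; ring
    have h2 : 2 * π * ((q * 12 + 0 : ℕ) : ℝ) * (5/12) = 0 + ((5 * q : ℕ) : ℤ) * (2 * π) := by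
      push_cast; ring
    rw [h1, h2, Real.cos_add_int_mul_two_pi, Real.cos_add_int_mul_two_pi]
    ring
  rw [this]
  exact hasSum_zero


/-- Fiberwise sums. -/
noncomputable def trigammaAuxG : Fin 12 → ℝ := fun r =>
  (Real.cos (2 * π * (r:ℕ) * (1/12)) - Real.cos (2 * π * (r:ℕ) * (5/12))) / 144 *
    trigamma (((r:ℕ):ℝ)/12)

/-- `ψ₁(11/12) − ψ₁(7/12) + ψ₁(1/12) − ψ₁(5/12) = 8π²√3`. -/
theorem trigamma_eval_sqrt_three :
    trigamma (11/12) - trigamma (7/12) + trigamma (1/12) - trigamma (5/12) =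
      8 * π^2 * Real.sqrt 3 := by

  have h1 : HasSum (fun p : ℕ × Fin 12 => trigammaAuxF (p.1 * 12 + (p.2:ℕ))) (π^2/6) := by
    have := ((Nat.divModEquiv 12).symm.hasSum_iff).mpr hasSum_trigammaAuxF
    exact this
  have h2 : HasSum (fun p : Fin 12 × ℕ => trigammaAuxF (p.2 * 12 + (p.1:ℕ))) (π^2/6) := by
    have := ((Equiv.prodComm (Fin 12) ℕ).hasSum_iff).mpr h1
    exact this
  have h3 : HasSum trigammaAuxG (π^2/6) := by
    refine h2.prod_fiberwise fun r => ?_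
    obtain ⟨v, hv⟩ := r
    rcases Nat.eq_zero_or_pos v with h0 | h0
    · subst h0
      simpa [trigammaAuxG] using trigammaAuxF_fiber_zero
    · exact trigammaAuxF_fiber v h0 hv
  have h4 : ∑ r : Fin 12, trigammaAuxG r = π^2/6 := (hasSum_fintype trigammaAuxG).unique h3
  simp only [Fin.sum_univ_succ, Fin.sum_univ_zero, trigammaAuxG] at h4
  norm_num at h4

  have c1a : Real.cos (2 * π * (1/12)) = Real.sqrt 3 / 2 := by
    rw [show 2*π*(1/12) = π/6 by ring, Real.cos_pi_div_six]
  have c1b : Real.cos (2 * π * (5/12)) = -(Real.sqrt 3 / 2) := by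
    rw [show 2*π*(5/12) = π - π/6 by ring, Real.cos_pi_sub, Real.cos_pi_div_six]
  have c2a : Real.cos (2 * π * 2 * (1/12)) = 1/2 := by
    rw [show 2*π*2*(1/12) = π/3 by ring, Real.cos_pi_div_three]
  have c2b : Real.cos (2 * π * 2 * (5/12)) = 1/2 := by
    rw [show 2*π*2*(5/12) = 2*π - π/3 by ring, Real.cos_two_pi_sub, Real.cos_pi_div_three]
  have c3a : Real.cos (2 * π * 3 * (1/12)) = 0 := by
    rw [show 2*π*3*(1/12) = π/2 by ring, Real.cos_pi_div_two]
  have c3b : Real.cos (2 * π * 3 * (5/12)) = 0 := by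
    rw [show 2*π*3*(5/12) = π/2 + 2*π by ring, Real.cos_add_two_pi, Real.cos_pi_div_two]
  have c4a : Real.cos (2 * π * 4 * (1/12)) = -(1/2) := by
    rw [show 2*π*4*(1/12) = π - π/3 by ring, Real.cos_pi_sub, Real.cos_pi_div_three]
  have c4b : Real.cos (2 * π * 4 * (5/12)) = -(1/2) := by
    rw [show 2*π*4*(5/12) = (π/3 + π) + 2*π by ring, Real.cos_add_two_pi, Real.cos_add_pi,
      Real.cos_pi_div_three]
  have c5a : Real.cos (2 * π * 5 * (1/12)) = -(Real.sqrt 3 / 2) := by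
    rw [show 2*π*5*(1/12) = π - π/6 by ring, Real.cos_pi_sub, Real.cos_pi_div_six]
  have c5b : Real.cos (2 * π * 5 * (5/12)) = Real.sqrt 3 / 2 := by
    rw [show 2*π*5*(5/12) = (π/6 + 2*π) + 2*π by ring, Real.cos_add_two_pi, Real.cos_add_two_pi,
      Real.cos_pi_div_six]
  have c6a : Real.cos (2 * π * 6 * (1/12)) = -1 := by
    rw [show 2*π*6*(1/12) = π by ring, Real.cos_pi]
  have c6b : Real.cos (2 * π * 6 * (5/12)) = -1 := by
    rw [show 2*π*6*(5/12) = (π + 2*π) + 2*π by ring, Real.cos_add_two_pi, Real.cos_add_two_pi,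
      Real.cos_pi]
  have c7a : Real.cos (2 * π * 7 * (1/12)) = -(Real.sqrt 3 / 2) := by
    rw [show 2*π*7*(1/12) = π/6 + π by ring, Real.cos_add_pi, Real.cos_pi_div_six]
  have c7b : Real.cos (2 * π * 7 * (5/12)) = Real.sqrt 3 / 2 := by
    rw [show 2*π*7*(5/12) = ((2*π - π/6) + 2*π) + 2*π by ring, Real.cos_add_two_pi,
      Real.cos_add_two_pi, Real.cos_two_pi_sub, Real.cos_pi_div_six]
  have c8a : Real.cos (2 * π * 8 * (1/12)) = -(1/2) := by
    rw [show 2*π*8*(1/12) = π/3 + π by ring, Real.cos_add_pi, Real.cos_pi_div_three]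
  have c8b : Real.cos (2 * π * 8 * (5/12)) = -(1/2) := by
    rw [show 2*π*8*(5/12) = (((π - π/3) + 2*π) + 2*π) + 2*π by ring, Real.cos_add_two_pi,
      Real.cos_add_two_pi, Real.cos_add_two_pi, Real.cos_pi_sub, Real.cos_pi_div_three]
  have c9a : Real.cos (2 * π * 9 * (1/12)) = 0 := by
    rw [show 2*π*9*(1/12) = π/2 + π by ring, Real.cos_add_pi, Real.cos_pi_div_two, neg_zero]
  have c9b : Real.cos (2 * π * 9 * (5/12)) = 0 := by
    rw [show 2*π*9*(5/12) = (((π/2 + π) + 2*π) + 2*π) + 2*π by ring, Real.cos_add_two_pi,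
      Real.cos_add_two_pi, Real.cos_add_two_pi, Real.cos_add_pi, Real.cos_pi_div_two, neg_zero]
  have c10a : Real.cos (2 * π * 10 * (1/12)) = 1/2 := by
    rw [show 2*π*10*(1/12) = 2*π - π/3 by ring, Real.cos_two_pi_sub, Real.cos_pi_div_three]
  have c10b : Real.cos (2 * π * 10 * (5/12)) = 1/2 := by
    rw [show 2*π*10*(5/12) = ((((π/3 + 2*π) + 2*π) + 2*π) + 2*π) by ring, Real.cos_add_two_pi,
      Real.cos_add_two_pi, Real.cos_add_two_pi, Real.cos_add_two_pi, Real.cos_pi_div_three]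
  have c11a : Real.cos (2 * π * 11 * (1/12)) = Real.sqrt 3 / 2 := by
    rw [show 2*π*11*(1/12) = 2*π - π/6 by ring, Real.cos_two_pi_sub, Real.cos_pi_div_six]
  have c11b : Real.cos (2 * π * 11 * (5/12)) = -(Real.sqrt 3 / 2) := by
    rw [show 2*π*11*(5/12) = ((((π/6 + π) + 2*π) + 2*π) + 2*π) + 2*π by ring, Real.cos_add_two_pi,
      Real.cos_add_two_pi, Real.cos_add_two_pi, Real.cos_add_two_pi, Real.cos_add_pi,
      Real.cos_pi_div_six]
  rw [c1a, c1b, c2a, c2b, c3a, c3b, c4a, c4b, c5a, c5b, c6a, c6b, c7a, c7b, c8a, c8b, c9a, c9b,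
    c10a, c10b, c11a, c11b] at h4
  have hsq : Real.sqrt 3 * Real.sqrt 3 = 3 := Real.mul_self_sqrt (by norm_num)
  linear_combination (48 * Real.sqrt 3) * h4 -
    ((trigamma (11/12) - trigamma (7/12) + trigamma (1/12) - trigamma (5/12)) / 3) * hsq
end

section
/- ψ₁(8/9) − ψ₁(7/9) + ψ₁(1/9) − ψ₁(2/9) = 8π²·cos(2π/9), where ψ₁(x) = Σ_{n=0}^∞ 1/(n+x)². -/
open Real

/-- Sum over a residue class mod 9. -/
noncomputable def S9 (r : ℕ) : ℝ := ∑' m : ℕ, 1 / ((r : ℝ) + 9*m)^2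

lemma cosP (x y : ℝ) (n : ℤ) (h : x = y + (n : ℝ)*(2*π)) : Real.cos x = Real.cos y := by
  rw [h, Real.cos_add_int_mul_two_pi]

lemma cosN (x y : ℝ) (n : ℤ) (h : x = -y + (n : ℝ)*(2*π)) : Real.cos x = Real.cos y := by
  rw [h, Real.cos_add_int_mul_two_pi, Real.cos_neg]

lemma key_hasSum (x : ℝ) (hx : x ∈ Set.Icc (0:ℝ) 1) :
    HasSum (fun n : ℕ => 1 / (n:ℝ)^2 * Real.cos (2*π*n*x)) (π^2 * (x^2 - x + 1/6)) := by
  have h := hasSum_one_div_nat_pow_mul_cos (k := 1) one_ne_zero hx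
  have hb : ((Polynomial.bernoulli 2).map (algebraMap ℚ ℝ)).eval x = x^2 - x + 1/6 := by
    simp [Polynomial.bernoulli, Finset.sum_range_succ]
    norm_num [bernoulli, bernoulli'_two]
    ring
  convert h using 2 with n
  · norm_num [Nat.factorial]
    ring
  · rw [show (2*1 : ℕ) = 2 from rfl, hb]

lemma zmod9_sum (g : ZMod 9 → ℝ) :
    ∑ j : ZMod 9, g j = g 0 + g 1 + g 2 + g 3 + g 4 + g 5 + g 6 + g 7 + g 8 := by
  show ∑ j : Fin 9, (id (α := Fin 9 → ℝ) g) j = _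
  rw [show (g 3 : ℝ) = g (Fin.succ 2) from rfl, show (g 4 : ℝ) = g ((Fin.succ 2).succ) from rfl,
    show (g 5 : ℝ) = g ((Fin.succ 2).succ.succ) from rfl,
    show (g 6 : ℝ) = g ((Fin.succ 2).succ.succ.succ) from rfl,
    show (g 7 : ℝ) = g ((Fin.succ 2).succ.succ.succ.succ) from rfl,
    show (g 8 : ℝ) = g ((Fin.succ 2).succ.succ.succ.succ.succ) from rfl]
  rw [Fin.sum_univ_succ, Fin.sum_univ_succ, Fin.sum_univ_succ, Fin.sum_univ_succ, Fin.sum_univ_succ,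
    Fin.sum_univ_succ, Fin.sum_univ_succ, Fin.sum_univ_succ, Fin.sum_univ_one]
  norm_num
  simp only [add_assoc]; rfl

lemma inner_eq (a r : ℕ) :
    (∑' m : ℕ, (1 / (((r + 9*m : ℕ)) : ℝ)^2 * Real.cos (2*π*((r + 9*m : ℕ) : ℝ)*((a:ℝ)/9))))
      = Real.cos (2*π*(r:ℝ)*((a:ℝ)/9)) * S9 r := by
  rw [S9, ← tsum_mul_left]
  refine tsum_congr fun m => ?_
  have harg : 2*π*(((r:ℝ)) + 9*m)*((a:ℝ)/9)
      = 2*π*(r:ℝ)*((a:ℝ)/9) + (((a*m : ℕ) : ℤ) : ℝ)*(2*π) := by push_cast; ring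
  push_cast
  rw [harg, Real.cos_add_int_mul_two_pi]
  ring

lemma resid_eq (a : ℕ) (hx : (a:ℝ)/9 ∈ Set.Icc (0:ℝ) 1) :
    Real.cos (2*π*0*((a:ℝ)/9)) * S9 0 + Real.cos (2*π*1*((a:ℝ)/9)) * S9 1
      + Real.cos (2*π*2*((a:ℝ)/9)) * S9 2 + Real.cos (2*π*3*((a:ℝ)/9)) * S9 3
      + Real.cos (2*π*4*((a:ℝ)/9)) * S9 4 + Real.cos (2*π*5*((a:ℝ)/9)) * S9 5
      + Real.cos (2*π*6*((a:ℝ)/9)) * S9 6 + Real.cos (2*π*7*((a:ℝ)/9)) * S9 7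
      + Real.cos (2*π*8*((a:ℝ)/9)) * S9 8
      = π^2 * (((a:ℝ)/9)^2 - (a:ℝ)/9 + 1/6) := by
  have hs := key_hasSum ((a:ℝ)/9) hx
  have h0 := Nat.sumByResidueClasses hs.summable 9
  rw [hs.tsum_eq] at h0
  have hj : ∀ j : ZMod 9,
      (∑' m : ℕ, (1 / (((j.val + 9*m : ℕ)) : ℝ)^2
        * Real.cos (2*π*((j.val + 9*m : ℕ) : ℝ)*((a:ℝ)/9))))
      = Real.cos (2*π*(j.val:ℝ)*((a:ℝ)/9)) * S9 j.val := fun j => inner_eq a j.val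
  simp only [hj] at h0
  rw [zmod9_sum (fun j : ZMod 9 => Real.cos (2*π*(j.val:ℝ)*((a:ℝ)/9)) * S9 j.val)] at h0
  simp only [show ((0:ZMod 9)).val = 0 from rfl, show ((1:ZMod 9)).val = 1 from rfl,
    show ((2:ZMod 9)).val = 2 from rfl, show ((3:ZMod 9)).val = 3 from rfl,
    show ((4:ZMod 9)).val = 4 from rfl, show ((5:ZMod 9)).val = 5 from rfl,
    show ((6:ZMod 9)).val = 6 from rfl, show ((7:ZMod 9)).val = 7 from rfl,
    show ((8:ZMod 9)).val = 8 from rfl] at h0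
  push_cast at h0
  linear_combination -h0

lemma trigamma_eq (a : ℕ) (ha : 0 < a) : trigamma ((a:ℝ)/9) = 81 * S9 a := by
  rw [trigamma, S9, ← tsum_mul_left]
  refine tsum_congr fun n => ?_
  have h1 : (0:ℝ) < (a:ℝ) + 9*n := by positivity
  have h2 : (0:ℝ) < (n:ℝ) + (a:ℝ)/9 := by positivity
  field_simp
  ring

/-- `ψ₁(8/9) − ψ₁(7/9) + ψ₁(1/9) − ψ₁(2/9) = 8π²cos(2π/9)`. -/
theorem trigamma_eval_cos_two_pi_ninth :
    trigamma (8/9) - trigamma (7/9) + trigamma (1/9) - trigamma (2/9) =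
      8 * π^2 * Real.cos (2 * π / 9) := by
  have hc3 : Real.cos (2*π/3) = -(1/2) := by
    rw [show 2*π/3 = π - π/3 by ring, Real.cos_pi_sub, Real.cos_pi_div_three]
  have hc2 : Real.cos (2*π*2/9) = 2*Real.cos (2*π/9)^2 - 1 := by
    rw [show 2*π*2/9 = 2*(2*π/9) by ring, Real.cos_two_mul]
  have hc4 : Real.cos (2*π*4/9) = 2*Real.cos (2*π*2/9)^2 - 1 := by
    rw [show 2*π*4/9 = 2*(2*π*2/9) by ring, Real.cos_two_mul]
  have hcub : 4*Real.cos (2*π/9)^3 - 3*Real.cos (2*π/9) = -(1/2) := by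
    have h3 := Real.cos_three_mul (2*π/9)
    rw [show 3*(2*π/9) = 2*π/3 by ring, hc3] at h3
    linarith
  have h1 := resid_eq 1 (Set.mem_Icc.mpr (by norm_num))
  have h2 := resid_eq 2 (Set.mem_Icc.mpr (by norm_num))
  have h4 := resid_eq 4 (Set.mem_Icc.mpr (by norm_num))
  simp only [Nat.cast_one, Nat.cast_ofNat] at h1 h2 h4
  have k10 : Real.cos (2*π*0*(1/9)) = 1 := by norm_num
  have k11 : Real.cos (2*π*1*(1/9)) = Real.cos (2*π/9) := cosP _ _ 0 (by push_cast; ring)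
  have k12 : Real.cos (2*π*2*(1/9)) = Real.cos (2*π*2/9) := cosP _ _ 0 (by push_cast; ring)
  have k13 : Real.cos (2*π*3*(1/9)) = Real.cos (2*π/3) := cosP _ _ 0 (by push_cast; ring)
  have k14 : Real.cos (2*π*4*(1/9)) = Real.cos (2*π*4/9) := cosP _ _ 0 (by push_cast; ring)
  have k15 : Real.cos (2*π*5*(1/9)) = Real.cos (2*π*4/9) := cosN _ _ 1 (by push_cast; ring)
  have k16 : Real.cos (2*π*6*(1/9)) = Real.cos (2*π/3) := cosN _ _ 1 (by push_cast; ring)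
  have k17 : Real.cos (2*π*7*(1/9)) = Real.cos (2*π*2/9) := cosN _ _ 1 (by push_cast; ring)
  have k18 : Real.cos (2*π*8*(1/9)) = Real.cos (2*π/9) := cosN _ _ 1 (by push_cast; ring)
  have k20 : Real.cos (2*π*0*(2/9)) = 1 := by norm_num
  have k21 : Real.cos (2*π*1*(2/9)) = Real.cos (2*π*2/9) := cosP _ _ 0 (by push_cast; ring)
  have k22 : Real.cos (2*π*2*(2/9)) = Real.cos (2*π*4/9) := cosP _ _ 0 (by push_cast; ring)
  have k23 : Real.cos (2*π*3*(2/9)) = Real.cos (2*π/3) := cosN _ _ 1 (by push_cast; ring)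
  have k24 : Real.cos (2*π*4*(2/9)) = Real.cos (2*π/9) := cosN _ _ 1 (by push_cast; ring)
  have k25 : Real.cos (2*π*5*(2/9)) = Real.cos (2*π/9) := cosP _ _ 1 (by push_cast; ring)
  have k26 : Real.cos (2*π*6*(2/9)) = Real.cos (2*π/3) := cosP _ _ 1 (by push_cast; ring)
  have k27 : Real.cos (2*π*7*(2/9)) = Real.cos (2*π*4/9) := cosN _ _ 2 (by push_cast; ring)
  have k28 : Real.cos (2*π*8*(2/9)) = Real.cos (2*π*2/9) := cosN _ _ 2 (by push_cast; ring)
  have k40 : Real.cos (2*π*0*(4/9)) = 1 := by norm_num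
  have k41 : Real.cos (2*π*1*(4/9)) = Real.cos (2*π*4/9) := cosP _ _ 0 (by push_cast; ring)
  have k42 : Real.cos (2*π*2*(4/9)) = Real.cos (2*π/9) := cosN _ _ 1 (by push_cast; ring)
  have k43 : Real.cos (2*π*3*(4/9)) = Real.cos (2*π/3) := cosP _ _ 1 (by push_cast; ring)
  have k44 : Real.cos (2*π*4*(4/9)) = Real.cos (2*π*2/9) := cosN _ _ 2 (by push_cast; ring)
  have k45 : Real.cos (2*π*5*(4/9)) = Real.cos (2*π*2/9) := cosP _ _ 2 (by push_cast; ring)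
  have k46 : Real.cos (2*π*6*(4/9)) = Real.cos (2*π/3) := cosN _ _ 3 (by push_cast; ring)
  have k47 : Real.cos (2*π*7*(4/9)) = Real.cos (2*π/9) := cosP _ _ 3 (by push_cast; ring)
  have k48 : Real.cos (2*π*8*(4/9)) = Real.cos (2*π*4/9) := cosN _ _ 4 (by push_cast; ring)
  rw [k10, k11, k12, k13, k14, k15, k16, k17, k18] at h1
  rw [k20, k21, k22, k23, k24, k25, k26, k27, k28] at h2
  rw [k40, k41, k42, k43, k44, k45, k46, k47, k48] at h4
  rw [hc3, hc4, hc2] at h1 h2 h4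
  have t8 : trigamma (8/9) = 81 * S9 8 := by
    have h := trigamma_eq 8 (by norm_num)
    push_cast at h
    exact h
  have t7 : trigamma (7/9) = 81 * S9 7 := by
    have h := trigamma_eq 7 (by norm_num)
    push_cast at h
    exact h
  have t1 : trigamma (1/9) = 81 * S9 1 := by
    have h := trigamma_eq 1 (by norm_num)
    push_cast at h
    exact h
  have t2 : trigamma (2/9) = 81 * S9 2 := by
    have h := trigamma_eq 2 (by norm_num)
    push_cast at h
    exact h
  rw [t8, t7, t1, t2]
  linear_combination (36 + 36*Real.cos (2*π/9) - 72*Real.cos (2*π/9)^2) * h1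
    + (-72 + 36*Real.cos (2*π/9) + 144*Real.cos (2*π/9)^2) * h2
    + (36 - 72*Real.cos (2*π/9) - 72*Real.cos (2*π/9)^2) * h4
    - (54*(S9 1 + S9 8 - S9 2 - S9 7)
       + Real.cos (2*π/9)*(180*(S9 1 + S9 8) - 252*(S9 2 + S9 7) + 72*(S9 4 + S9 5))
       + Real.cos (2*π/9)^2*(-144*(S9 1 + S9 8) + 72*(S9 2 + S9 7) + 72*(S9 4 + S9 5))
       + Real.cos (2*π/9)^3*(-144*(S9 1 + S9 8) + 288*(S9 2 + S9 7) - 144*(S9 4 + S9 5))) * hcub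
end

section
/- ψ₁(7/9) − ψ₁(5/9) + ψ₁(2/9) − ψ₁(4/9) = 8π²·cos(4π/9), where ψ₁(x) = Σ_{n=0}^∞ 1/(n+x)². -/
open Real

lemma cubic9 : 8*Real.cos (2*π/9)^3 - 6*Real.cos (2*π/9) + 1 = 0 := by
  have h := Real.cos_three_mul (2*π/9)
  rw [show 3*(2*π/9) = π - π/3 by ring, Real.cos_pi_sub, Real.cos_pi_div_three] at h
  linarith

lemma cosr0 : Real.cos (2*π*((0:ℕ):ℝ)/9) = 1 := by norm_num

lemma cosr1 : Real.cos (2*π*((1:ℕ):ℝ)/9) = Real.cos (2*π/9) := by norm_num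

lemma cosr2 : Real.cos (2*π*((2:ℕ):ℝ)/9) = 2*Real.cos (2*π/9)^2 - 1 := by
  rw [show 2*π*((2:ℕ):ℝ)/9 = 2*(2*π/9) by push_cast; ring, Real.cos_two_mul]

lemma cosr3 : Real.cos (2*π*((3:ℕ):ℝ)/9) = -(1/2) := by
  rw [show 2*π*((3:ℕ):ℝ)/9 = π - π/3 by push_cast; ring, Real.cos_pi_sub, Real.cos_pi_div_three]

lemma cosr4 : Real.cos (2*π*((4:ℕ):ℝ)/9) = 8*Real.cos (2*π/9)^4 - 8*Real.cos (2*π/9)^2 + 1 := by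
  rw [show 2*π*((4:ℕ):ℝ)/9 = 2*(2*π*((2:ℕ):ℝ)/9) by push_cast; ring, Real.cos_two_mul, cosr2]
  ring

lemma cosr5 : Real.cos (2*π*((5:ℕ):ℝ)/9) = 8*Real.cos (2*π/9)^4 - 8*Real.cos (2*π/9)^2 + 1 := by
  rw [show 2*π*((5:ℕ):ℝ)/9 = ((1:ℕ):ℝ)*(2*π) - 2*π*((4:ℕ):ℝ)/9 by push_cast; ring,
    Real.cos_nat_mul_two_pi_sub, cosr4]

lemma cosr6 : Real.cos (2*π*((6:ℕ):ℝ)/9) = -(1/2) := by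
  rw [show 2*π*((6:ℕ):ℝ)/9 = ((1:ℕ):ℝ)*(2*π) - 2*π*((3:ℕ):ℝ)/9 by push_cast; ring,
    Real.cos_nat_mul_two_pi_sub, cosr3]

lemma cosr7 : Real.cos (2*π*((7:ℕ):ℝ)/9) = 2*Real.cos (2*π/9)^2 - 1 := by
  rw [show 2*π*((7:ℕ):ℝ)/9 = ((1:ℕ):ℝ)*(2*π) - 2*π*((2:ℕ):ℝ)/9 by push_cast; ring,
    Real.cos_nat_mul_two_pi_sub, cosr2]

lemma cosr8 : Real.cos (2*π*((8:ℕ):ℝ)/9) = Real.cos (2*π/9) := by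
  rw [show 2*π*((8:ℕ):ℝ)/9 = ((1:ℕ):ℝ)*(2*π) - 2*π*((1:ℕ):ℝ)/9 by push_cast; ring,
    Real.cos_nat_mul_two_pi_sub, cosr1]

lemma cosR2 : Real.cos (2*π*(2:ℝ)/9) = Real.cos (2*π*((2:ℕ):ℝ)/9) := by norm_num

lemma cosR3 : Real.cos (2*π*(3:ℝ)/9) = Real.cos (2*π*((3:ℕ):ℝ)/9) := by norm_num

lemma cosR4 : Real.cos (2*π*(4:ℝ)/9) = Real.cos (2*π*((4:ℕ):ℝ)/9) := by norm_num

lemma cosR5 : Real.cos (2*π*(5:ℝ)/9) = Real.cos (2*π*((5:ℕ):ℝ)/9) := by norm_num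

lemma cosR6 : Real.cos (2*π*(6:ℝ)/9) = Real.cos (2*π*((6:ℕ):ℝ)/9) := by norm_num

lemma cosR7 : Real.cos (2*π*(7:ℝ)/9) = Real.cos (2*π*((7:ℕ):ℝ)/9) := by norm_num

lemma cosR8 : Real.cos (2*π*(8:ℝ)/9) = Real.cos (2*π*((8:ℕ):ℝ)/9) := by norm_num

lemma cosnat (m j : ℕ) :
    Real.cos (2*π*(m:ℝ)*((j:ℝ)/9)) = Real.cos (2*π*(((m*j) % 9 : ℕ):ℝ)/9) := by
  have h : 9 * (m*j/9) + (m*j) % 9 = m*j := Nat.div_add_mod (m*j) 9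
  have hc := congrArg (fun k : ℕ => (k:ℝ)) h
  push_cast at hc
  rw [show 2*π*(m:ℝ)*((j:ℝ)/9) = 2*π*(((m*j) % 9 : ℕ):ℝ)/9 + ((m*j/9 : ℕ):ℝ)*(2*π) by
    linear_combination (-(2*π/9)) * hc, Real.cos_add_nat_mul_two_pi]

lemma group9 {f : ℕ → ℝ} {S : ℝ} (h : HasSum f S) :
    HasSum (fun n : ℕ ↦ ∑ r : Fin 9, f (n * 9 + r)) S := by
  have h2 := (Nat.divModEquiv 9).symm.hasSum_iff.mpr h
  exact h2.prod_fiberwise fun n => hasSum_fintype _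

lemma modred (n v j : ℕ) : ((n*9+v)*j) % 9 = (v*j) % 9 := by
  rw [Nat.mul_mod, Nat.add_comm, Nat.add_mul_mod_self_right, ← Nat.mul_mod]

lemma trig_summable {a : ℝ} (ha : 0 < a) (ha1 : a ≤ 1) :
    Summable (fun n : ℕ ↦ 1/((n:ℝ)+a)^2) := by
  have hs : Summable (fun n : ℕ ↦ 1/((n:ℝ)+1)^2) := by
    have := Real.summable_one_div_nat_pow.mpr (le_refl 2)
    exact_mod_cast (summable_nat_add_iff 1).mpr this
  refine Summable.of_nonneg_of_le (fun n => by positivity) (fun n => ?_) (hs.mul_left (1/a^2))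
  have h1 : a * ((n:ℝ)+1) ≤ (n:ℝ)+a := by nlinarith [Nat.cast_nonneg (α := ℝ) n]
  have h2 : (0:ℝ) < a * ((n:ℝ)+1) := by positivity
  calc 1/((n:ℝ)+a)^2 ≤ 1/(a*((n:ℝ)+1))^2 := by
        apply one_div_le_one_div_of_le (by positivity)
        exact pow_le_pow_left₀ (le_of_lt h2) h1 2
    _ = 1/a^2 * (1/((n:ℝ)+1)^2) := by field_simp

lemma trig_hasSum {a : ℝ} (ha : 0 < a) (ha1 : a ≤ 1) :
    HasSum (fun n : ℕ ↦ 1/((n:ℝ)+a)^2) (trigamma a) :=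
  (trig_summable ha ha1).hasSum

lemma cos_series (j : ℕ) (hj : j ≤ 9) :
    HasSum (fun n : ℕ ↦ 1/(n:ℝ)^(2*1) * Real.cos (2*π*n*((j:ℝ)/9)))
      (π^2 * (((j:ℝ)/9)^2 - (j:ℝ)/9 + 1/6)) := by
  have hx : (j:ℝ)/9 ∈ Set.Icc (0:ℝ) 1 := by
    refine ⟨by positivity, ?_⟩
    rw [div_le_one (by norm_num)]
    exact_mod_cast hj
  have h := hasSum_one_div_nat_pow_mul_cos (k := 1) one_ne_zero hx
  have hv : ((-1:ℝ)) ^ (1+1) * (2*π)^(2*1)/2/((2*1).factorial : ℝ) *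
      (Polynomial.map (algebraMap ℚ ℝ) (Polynomial.bernoulli (2*1))).eval ((j:ℝ)/9)
      = π^2 * (((j:ℝ)/9)^2 - (j:ℝ)/9 + 1/6) := by
    have h2 : bernoulli 2 = 1/6 := by rw [bernoulli, bernoulli'_two]; norm_num
    simp [Polynomial.bernoulli, Finset.sum_range_succ, bernoulli_zero, bernoulli_one, h2,
      Nat.factorial]
    ring
  exact hv ▸ h

/-- `ψ₁(7/9) − ψ₁(5/9) + ψ₁(2/9) − ψ₁(4/9) = 8π²cos(4π/9)`. -/
theorem trigamma_eval_cos_four_pi_ninth :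
    trigamma (7/9) - trigamma (5/9) + trigamma (2/9) - trigamma (4/9) =
      8 * π^2 * Real.cos (4 * π / 9) := by
  have hcu := cubic9
  have t7 := trig_hasSum (a := 7/9) (by norm_num) (by norm_num)
  have t5 := trig_hasSum (a := 5/9) (by norm_num) (by norm_num)
  have t2 := trig_hasSum (a := 2/9) (by norm_num) (by norm_num)
  have t4 := trig_hasSum (a := 4/9) (by norm_num) (by norm_num)
  have HA := ((t7.sub t5).add t2).sub t4
  have H1 := (cos_series 1 (by norm_num)).mul_left (8*Real.cos (2*π/9)^2 + 2*Real.cos (2*π/9) - 4)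
  have H2 := (cos_series 2 (by norm_num)).mul_left (-4*Real.cos (2*π/9)^2 - 4*Real.cos (2*π/9) + 2)
  have H4 := (cos_series 4 (by norm_num)).mul_left (-4*Real.cos (2*π/9)^2 + 2*Real.cos (2*π/9) + 2)
  have H5 := (cos_series 5 (by norm_num)).mul_left (-4*Real.cos (2*π/9)^2 + 2*Real.cos (2*π/9) + 2)
  have H7 := (cos_series 7 (by norm_num)).mul_left (-4*Real.cos (2*π/9)^2 - 4*Real.cos (2*π/9) + 2)
  have H8 := (cos_series 8 (by norm_num)).mul_left (8*Real.cos (2*π/9)^2 + 2*Real.cos (2*π/9) - 4)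
  have HG := ((((H1.add H2).add H4).add H5).add H7).add H8
  have HB := (group9 HG).mul_left 9
  have HA' := HB.congr_fun (g := fun n : ℕ ↦
      1/((n:ℝ)+7/9)^2 - 1/((n:ℝ)+5/9)^2 + 1/((n:ℝ)+2/9)^2 - 1/((n:ℝ)+4/9)^2) ?_
  · rw [HA.unique HA']
    rw [show (4:ℝ) * π / 9 = 2*(2*π/9) by ring, Real.cos_two_mul]
    push_cast
    ring
  · intro n
    simp only [Fin.sum_univ_succ, Fin.sum_univ_zero, add_zero]
    simp only [cosnat, modred]
    norm_num [cosr0, cosr1, cosr2, cosr3, cosr4, cosr5, cosr6, cosr7, cosr8]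
    simp only [cosR2, cosR3, cosR4, cosR5, cosR6, cosR7, cosR8,
      cosr2, cosr3, cosr4, cosr5, cosr6, cosr7, cosr8]
    have h7 : (((n:ℝ)+7/9)^2)⁻¹ = 81*((((n:ℝ)*9+7))^2)⁻¹ := by
      have h : ((n:ℝ)*9+7) ≠ 0 := by positivity
      field_simp; ring
    have h5 : (((n:ℝ)+5/9)^2)⁻¹ = 81*((((n:ℝ)*9+5))^2)⁻¹ := by
      have h : ((n:ℝ)*9+5) ≠ 0 := by positivity
      field_simp; ring
    have h2 : (((n:ℝ)+2/9)^2)⁻¹ = 81*((((n:ℝ)*9+2))^2)⁻¹ := by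
      have h : ((n:ℝ)*9+2) ≠ 0 := by positivity
      field_simp; ring
    have h4 : (((n:ℝ)+4/9)^2)⁻¹ = 81*((((n:ℝ)*9+4))^2)⁻¹ := by
      have h : ((n:ℝ)*9+4) ≠ 0 := by positivity
      field_simp; ring
    rw [h7, h5, h2, h4]
    linear_combination (-9 * ((-8*Real.cos (2*π/9)^3 + 4*Real.cos (2*π/9)^2 + 4*Real.cos (2*π/9)) * (((n:ℝ)*9+1)^2)⁻¹ + (-8*Real.cos (2*π/9)^3 - 8*Real.cos (2*π/9)^2 + 10*Real.cos (2*π/9) + 3) * (((n:ℝ)*9+2)^2)⁻¹ + (16*Real.cos (2*π/9)^3 + 4*Real.cos (2*π/9)^2 - 14*Real.cos (2*π/9) - 3) * (((n:ℝ)*9+4)^2)⁻¹ + (16*Real.cos (2*π/9)^3 + 4*Real.cos (2*π/9)^2 - 14*Real.cos (2*π/9) - 3) * (((n:ℝ)*9+5)^2)⁻¹ + (-8*Real.cos (2*π/9)^3 - 8*Real.cos (2*π/9)^2 + 10*Real.cos (2*π/9) + 3) * (((n:ℝ)*9+7)^2)⁻¹ + (-8*Real.cos (2*π/9)^3 + 4*Real.cos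 (2*π/9)^2 + 4*Real.cos (2*π/9)) * (((n:ℝ)*9+8)^2)⁻¹)) * hcu
end
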